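/- arXiv:2105.12047 — 2 statements merged into one kernel-verified Lean document; each statement's English description precedes it below -/
import Mathlib

section
/- Let μ ∈ Γ_k ⊂ ℝ^n with 0 ≤ l < k ≤ n, and set G(μ) = (σ_k(μ)/σ_l(μ))^{1/(k-l)}. Then the sum of partial derivatives satisfies Σ_{i=1}^n ∂G/∂μ_i ≥ (C(n,k)/C(n,l))^{1/(k-l)}. -/
/-!
Along the diagonal, `σ_m(μ + t𝟙)` has `t`-derivative `(n - m + 1) σ_{m-1}(μ)`, because
`∏ (X + μ_i + t)` is the Taylor shift of `∏ (X + μ_i)`. With the means `E_m = σ_m / C(n,m)`,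
the sum of the partial derivatives of `G` is therefore
`G(μ) (k E_{k-1}/E_k - l E_{l-1}/E_l) / (k - l)`, and
`G(μ) = (C(n,k)/C(n,l))^{1/(k-l)} g` with `g = (E_k/E_l)^{1/(k-l)}`.

Newton's inequalities `E_i E_{i+2} ≤ E_{i+1}^2` make the ratios `E_{i+1}/E_i` non-increasing
on `[0, k)`. As the geometric mean of the ratios with `l ≤ i < k`, `g` satisfies
`E_k/E_{k-1} ≤ g ≤ E_l/E_{l-1}` (the `l`-term vanishes when `l = 0`), so
`k E_{k-1}/E_k - l E_{l-1}/E_l ≥ (k - l)/g`.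

Newton's inequalities come from real-rootedness: `∏ (X + μ_i) = ∑ C(n,j) E_{n-j} X^j`, and
for a real-rooted `∑ C(N,j) a_j X^j`, differentiating (Rolle) only shifts the sequence `a`
while reflecting reverses it. Combining the two reaches the real-rooted quadratic
`a_i + 2 a_{i+1} X + a_{i+2} X^2`, whose discriminant is nonnegative.
-/

open Finset

/-- The `m`-th elementary symmetric polynomial of `μ : Fin n → ℝ`. -/
noncomputable def esymm (n m : ℕ) (μ : Fin n → ℝ) : ℝ :=
  ∑ s ∈ Finset.powersetCard m (Finset.univ : Finset (Fin n)), ∏ i ∈ s, μ i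

/-- The Hessian quotient operator `G(μ) = (σ_k(μ)/σ_l(μ))^{1/(k-l)}`. -/
noncomputable def Gq (n k l : ℕ) (μ : Fin n → ℝ) : ℝ :=
  (esymm n k μ / esymm n l μ) ^ ((((k : ℝ) - l))⁻¹)

open Polynomial

namespace Polynomial

theorem Splits.derivative {f : ℝ[X]} (hf : f.Splits) : (derivative f).Splits := by
  rw [splits_iff_card_roots] at hf ⊢
  by_cases hd : f.natDegree = 0
  · rw [eq_C_of_natDegree_eq_zero hd, derivative_C, natDegree_zero, roots_zero, Multiset.card_zero]
  have h₁ := card_roots_le_derivative f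
  have h₂ := card_roots' (Polynomial.derivative f)
  have h₃ := natDegree_derivative_lt hd
  omega

theorem Splits.reverse {K : Type*} [Field K] {f : K[X]} (hf : f.Splits) : f.reverse.Splits := by
  induction hf using Submonoid.closure_induction with
  | mem g hg =>
    refine Splits.of_natDegree_le_one ((reverse_natDegree_le g).trans ?_)
    rcases hg with ⟨a, rfl⟩ | ⟨a, rfl⟩
    · exact (natDegree_C a).trans_le zero_le_one
    · exact natDegree_add_C.trans_le natDegree_X_le
  | one => simp [Polynomial.reverse]
  | mul g h _ _ hg hh => rw [reverse_mul_of_domain]; exact hg.mul hh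

theorem Splits.reflect {K : Type*} [Field K] {f : K[X]} (hf : f.Splits) {N : ℕ}
    (hN : f.natDegree ≤ N) : (reflect N f).Splits := by
  have h := reflect_mul f 1 le_rfl (natDegree_one.trans_le (Nat.zero_le (N - f.natDegree)))
  rw [mul_one, Nat.add_sub_cancel' hN, reflect_one] at h
  rw [h]
  exact hf.reverse.mul (Splits.X_pow _)

noncomputable def binomPoly {R : Type*} [CommSemiring R] (N : ℕ) (E : ℕ → R) : R[X] :=
  ∑ j ∈ range (N + 1), C (N.choose j * E j) * X ^ j

section binomPoly

variable {R : Type*} [CommSemiring R]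

theorem coeff_binomPoly (N : ℕ) (E : ℕ → R) (j : ℕ) :
    (binomPoly N E).coeff j = N.choose j * E j := by
  simp only [binomPoly, finsetSum_coeff, coeff_C_mul_X_pow]
  rw [sum_ite_eq]
  split_ifs with h
  · rfl
  · rw [Nat.choose_eq_zero_of_lt (by simpa using h), Nat.cast_zero, zero_mul]

theorem binomPoly_congr {N : ℕ} {E F : ℕ → R} (h : ∀ j ≤ N, E j = F j) :
    binomPoly N E = binomPoly N F :=
  sum_congr rfl fun j hj => by rw [h j (Nat.lt_succ_iff.mp (mem_range.mp hj))]

theorem natDegree_binomPoly_le (N : ℕ) (E : ℕ → R) : (binomPoly N E).natDegree ≤ N :=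
  natDegree_le_iff_coeff_eq_zero.mpr fun j hj => by
    rw [coeff_binomPoly, Nat.choose_eq_zero_of_lt (by exact_mod_cast hj), Nat.cast_zero, zero_mul]

theorem derivative_binomPoly (N : ℕ) (E : ℕ → R) :
    derivative (binomPoly (N + 1) E) =
      C ((N + 1 : ℕ) : R) * binomPoly N (fun j => E (j + 1)) := by
  ext j
  rw [coeff_derivative, coeff_C_mul, coeff_binomPoly, coeff_binomPoly]
  have h := congrArg (Nat.cast (R := R)) (Nat.add_one_mul_choose_eq N j)
  push_cast at h ⊢
  calc _ = ((N + 1).choose (j + 1) * (j + 1) : R) * E (j + 1) := by ring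
    _ = _ := by rw [← h]; ring

theorem reflect_binomPoly (N : ℕ) (E : ℕ → R) :
    reflect N (binomPoly N E) = binomPoly N (fun j => E (N - j)) := by
  ext j
  rw [coeff_reflect, coeff_binomPoly, coeff_binomPoly]
  rcases le_or_gt j N with h | h
  · rw [revAt_le h, Nat.choose_symm h]
  · rw [revAt_eq_self_of_lt h, Nat.choose_eq_zero_of_lt h, Nat.cast_zero, zero_mul, zero_mul]

end binomPoly

theorem Splits.binomPoly_shift {N : ℕ} (r : ℕ) {E : ℕ → ℝ}
    (h : (binomPoly (N + r) E).Splits) :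
    (binomPoly N (fun j => E (j + r))).Splits := by
  induction r generalizing E with
  | zero => simpa using h
  | succ r ih =>
    have hd := h.derivative
    rw [← add_assoc, derivative_binomPoly] at hd
    have h' : (binomPoly (N + r) fun j => E (j + 1)).Splits :=
      (splits_mul_iff_right (C_ne_zero.mpr (by positivity)) (Splits.C _)).mp hd
    simpa only [add_assoc, add_comm 1 r] using ih h'

theorem Splits.binomPoly_rev {N : ℕ} {E : ℕ → ℝ} (h : (binomPoly N E).Splits) :
    (binomPoly N (fun j => E (N - j))).Splits := by
  rw [← reflect_binomPoly]
  exact h.reflect (natDegree_binomPoly_le N E)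

theorem Splits.mul_le_sq_of_binomPoly_two {E : ℕ → ℝ} (h : (binomPoly 2 E).Splits) :
    E 0 * E 2 ≤ E 1 ^ 2 := by
  rcases eq_or_ne (E 2) 0 with h2 | h2
  · rw [h2, mul_zero]; positivity
  have hdeg : (binomPoly 2 E).degree ≠ 0 := by
    refine fun h0 => h2 ?_
    have h := coeff_eq_zero_of_degree_lt (n := 2) (by rw [h0]; norm_num)
    simpa [coeff_binomPoly] using h
  obtain ⟨x, hx⟩ := h.exists_eval_eq_zero hdeg
  have hx' : E 2 * (x * x) + 2 * E 1 * x + E 0 = 0 := by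
    rw [← hx]
    simp [binomPoly, sum_range_succ]
    ring
  have hd := discrim_eq_sq_of_quadratic_eq_zero hx'
  rw [discrim] at hd
  linarith [sq_nonneg (2 * E 2 * x + 2 * E 1)]

theorem Splits.binomPoly_mul_le_sq {N i : ℕ} {E : ℕ → ℝ} (h : (binomPoly N E).Splits)
    (hi : i + 2 ≤ N) : E i * E (i + 2) ≤ E (i + 1) ^ 2 := by
  obtain ⟨r, rfl⟩ : ∃ r, N = 2 + r + i := ⟨N - 2 - i, by omega⟩
  have h₂ :=
    ((h.binomPoly_shift i).binomPoly_rev.binomPoly_shift (N := 2) r).mul_le_sq_of_binomPoly_two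
  rwa [show 2 + r - (0 + r) + i = i + 2 by omega, show 2 + r - (1 + r) + i = i + 1 by omega,
    show 2 + r - (2 + r) + i = i by omega, mul_comm] at h₂

end Polynomial

theorem prod_Ico_div_of_ne_zero {K : Type*} [Field K] {p : ℕ → K} {m n : ℕ} (hmn : m ≤ n)
    (hp : ∀ i ∈ Icc m n, p i ≠ 0) : ∏ i ∈ Ico m n, p (i + 1) / p i = p n / p m := by
  induction n, hmn using Nat.le_induction with
  | base => rw [Ico_self, prod_empty, div_self (hp m (by simp))]
  | succ n hmn ih =>
    rw [prod_Ico_succ_top hmn, ih fun i hi => hp i (by simp at hi ⊢; omega)]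
    have := hp n (by simp; omega)
    field_simp

theorem prod_Ico_rpow_inv_mem_Icc {r : ℕ → ℝ} {l k : ℕ} (hlk : l < k)
    (hr : ∀ i ∈ Ico l k, 0 < r i) (hanti : AntitoneOn r (Ico l k)) :
    (∏ i ∈ Ico l k, r i) ^ ((k : ℝ) - l)⁻¹ ∈ Set.Icc (r (k - 1)) (r l) := by
  have hd : (k : ℝ) - l = ((k - l : ℕ) : ℝ) := by rw [Nat.cast_sub hlk.le]
  have hdpos : (0 : ℝ) < (k - l : ℕ) := by exact_mod_cast Nat.sub_pos_of_lt hlk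
  have hprod : 0 ≤ ∏ i ∈ Ico l k, r i := prod_nonneg fun i hi => (hr i hi).le
  have hl : l ∈ Ico l k := by simp [hlk]
  have hk : k - 1 ∈ Ico l k := by simp; omega
  constructor
  · rw [Real.le_rpow_inv_iff_of_pos (hr _ hk).le hprod (hd ▸ hdpos), hd, Real.rpow_natCast,
      ← Nat.card_Ico l k, ← prod_const]
    exact prod_le_prod (fun _ _ => (hr _ hk).le) fun i hi =>
      hanti hi hk (by simp at hi; omega)
  · rw [Real.rpow_inv_le_iff_of_pos hprod (hr _ hl).le (hd ▸ hdpos), hd, Real.rpow_natCast,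
      ← Nat.card_Ico l k, ← prod_const]
    exact prod_le_prod (fun i hi => (hr i hi).le) fun i hi => hanti hl hi (mem_Ico.mp hi).1

section LogConcave

variable {p : ℕ → ℝ} {k : ℕ}

theorem antitoneOn_div_of_mul_le_sq (hp : ∀ m ≤ k, 0 < p m)
    (hlc : ∀ i, i + 2 ≤ k → p i * p (i + 2) ≤ p (i + 1) ^ 2) :
    AntitoneOn (fun i => p (i + 1) / p i) (Set.Iio k) := by
  refine antitoneOn_of_succ_le Set.ordConnected_Iio fun i _ _ hi => ?_
  simp only [Order.succ_eq_add_one, Set.mem_Iio] at hi ⊢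
  rw [div_le_div_iff₀ (hp _ (by omega)) (hp _ (by omega))]
  nlinarith [hlc i (by omega)]

theorem sub_le_rpow_mul_of_mul_le_sq (hp : ∀ m ≤ k, 0 < p m)
    (hlc : ∀ i, i + 2 ≤ k → p i * p (i + 2) ≤ p (i + 1) ^ 2) {l : ℕ} (hlk : l < k) :
    (k : ℝ) - l ≤
      (p k / p l) ^ ((k : ℝ) - l)⁻¹ * (k * (p (k - 1) / p k) - l * (p (l - 1) / p l)) := by
  set r : ℕ → ℝ := fun i => p (i + 1) / p i
  have hanti : AntitoneOn r (Set.Iio k) := antitoneOn_div_of_mul_le_sq hp hlc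
  have hr : ∀ i < k, 0 < r i := fun i hi => div_pos (hp _ hi) (hp _ hi.le)
  have htel : p k / p l = ∏ i ∈ Ico l k, r i :=
    (prod_Ico_div_of_ne_zero hlk.le fun i hi => (hp i (mem_Icc.mp hi).2).ne').symm
  obtain ⟨hg_lower, hg_upper⟩ := htel ▸ prod_Ico_rpow_inv_mem_Icc hlk
    (fun i hi => hr i (mem_Ico.mp hi).2) (hanti.mono fun i hi => (mem_Ico.mp hi).2)
  set g := (p k / p l) ^ ((k : ℝ) - l)⁻¹
  have hg : 0 < g := Real.rpow_pos_of_pos (div_pos (hp k le_rfl) (hp l hlk.le)) _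
  have hk_term : k / g ≤ k * (p (k - 1) / p k) := by
    have : p (k - 1) / p k = (r (k - 1))⁻¹ := by
      simp only [r, Nat.sub_add_cancel (by omega : 1 ≤ k), inv_div]
    rw [this, div_eq_mul_inv]
    gcongr
    exact hr _ (by omega)
  have hl_term : l * (p (l - 1) / p l) ≤ l / g := by
    rcases Nat.eq_zero_or_pos l with rfl | hl
    · simp
    have : p (l - 1) / p l = (r (l - 1))⁻¹ := by
      simp only [r, Nat.sub_add_cancel hl, inv_div]
    rw [this, div_eq_mul_inv]
    gcongr
    exact hg_upper.trans (hanti (by simp; omega) (by simp; omega) (by omega))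
  calc (k : ℝ) - l = g * (k / g - l / g) := by field_simp
    _ ≤ g * (k * (p (k - 1) / p k) - l * (p (l - 1) / p l)) :=
      mul_le_mul_of_nonneg_left (sub_le_sub hk_term hl_term) hg.le

end LogConcave

theorem esymm_eq_coeff_prod {n m : ℕ} (hm : m ≤ n) (μ : Fin n → ℝ) :
    esymm n m μ = (∏ i, (X + C (μ i))).coeff (n - m) := by
  rw [Finset.prod_X_add_C_coeff _ _ (by simp), card_univ, Fintype.card_fin, Nat.sub_sub_self hm]
  rfl

noncomputable def esymmMean (n m : ℕ) (μ : Fin n → ℝ) : ℝ :=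
  esymm n m μ / n.choose m

theorem esymm_eq_choose_mul_esymmMean {n m : ℕ} (hm : m ≤ n) (μ : Fin n → ℝ) :
    esymm n m μ = n.choose m * esymmMean n m μ := by
  have : (n.choose m : ℝ) ≠ 0 := by exact_mod_cast (Nat.choose_pos hm).ne'
  rw [esymmMean]
  field_simp

theorem prod_X_add_C_eq_binomPoly (n : ℕ) (μ : Fin n → ℝ) :
    ∏ i, (X + C (μ i)) = binomPoly n (fun j => esymmMean n (n - j) μ) := by
  ext j
  rw [coeff_binomPoly]
  rcases le_or_gt j n with h | h
  · rw [← Nat.choose_symm h, ← esymm_eq_choose_mul_esymmMean (Nat.sub_le n j),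
      esymm_eq_coeff_prod (Nat.sub_le n j), Nat.sub_sub_self h]
  · rw [Nat.choose_eq_zero_of_lt h, Nat.cast_zero, zero_mul]
    exact coeff_eq_zero_of_natDegree_lt ((natDegree_prod_le _ _).trans_lt (by simpa using h))

theorem splits_binomPoly_esymmMean (n : ℕ) (μ : Fin n → ℝ) :
    (binomPoly n (fun j => esymmMean n j μ)).Splits := by
  have h := (prod_X_add_C_eq_binomPoly n μ ▸
    Splits.prod fun i _ => Splits.X_add_C (μ i)).binomPoly_rev
  rwa [binomPoly_congr fun j hj => by rw [Nat.sub_sub_self hj]] at h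

theorem esymmMean_mul_le_sq {n i : ℕ} (hi : i + 2 ≤ n) (μ : Fin n → ℝ) :
    esymmMean n i μ * esymmMean n (i + 2) μ ≤ esymmMean n (i + 1) μ ^ 2 :=
  (splits_binomPoly_esymmMean n μ).binomPoly_mul_le_sq hi

theorem esymm_add_const_eq_eval {n m : ℕ} (hm : m ≤ n) (μ : Fin n → ℝ) (t : ℝ) :
    esymm n m (fun i => μ i + t) = (hasseDeriv (n - m) (∏ i, (X + C (μ i)))).eval t := by
  rw [esymm_eq_coeff_prod hm, ← taylor_coeff, taylor_apply, Polynomial.prod_comp]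
  congr 2
  funext i
  simp only [add_comp, X_comp, C_comp, C_add]
  ring

/-- The derivative is `(n - m + 1) σ_{m-1}(μ)`, written so that it also covers `m = 0`. -/
theorem hasDerivAt_esymm_add_const {n m : ℕ} (hm : m ≤ n) (μ : Fin n → ℝ) :
    HasDerivAt (fun t => esymm n m (fun i => μ i + t))
      (m * n.choose m * esymmMean n (m - 1) μ) 0 := by
  simp_rw [esymm_add_const_eq_eval hm μ]
  refine (Polynomial.hasDerivAt _ 0).congr_deriv ?_
  rw [← coeff_zero_eq_eval_zero, coeff_derivative, hasseDeriv_coeff]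
  rcases m with _ | j
  · rw [coeff_eq_zero_of_natDegree_lt ((natDegree_prod_le _ _).trans_lt (by simp))]
    simp
  · have h := congrArg (Nat.cast (R := ℝ)) (Nat.choose_succ_right_eq n j)
    rw [show 0 + 1 + (n - (j + 1)) = n - j by omega, ← esymm_eq_coeff_prod (by omega),
      show n - (j + 1) = n - j - 1 by omega, Nat.choose_symm (by omega), Nat.choose_one_right,
      Nat.add_sub_cancel, esymm_eq_choose_mul_esymmMean (by omega)]
    push_cast at h ⊢
    linear_combination -esymmMean n j μ * h

theorem differentiable_esymm (n m : ℕ) : Differentiable ℝ (esymm n m) := by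
  unfold esymm
  fun_prop

section HessianQuotient

variable {n k l : ℕ} {μ : Fin n → ℝ}

theorem differentiableAt_Gq (hk : 0 < esymm n k μ) (hl : 0 < esymm n l μ) :
    DifferentiableAt ℝ (Gq n k l) μ := by
  have := differentiable_esymm n k
  have := differentiable_esymm n l
  unfold Gq
  fun_prop (disch := first | exact hl.ne' | exact Or.inl (div_pos hk hl).ne')

theorem hasDerivAt_Gq_add_const (hlk : l < k) (hkn : k ≤ n) (hk : 0 < esymm n k μ)
    (hl : 0 < esymm n l μ) :
    HasDerivAt (fun t => Gq n k l (fun i => μ i + t))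
      (((k : ℝ) - l)⁻¹ * Gq n k l μ *
        (k * (esymmMean n (k - 1) μ / esymmMean n k μ) -
          l * (esymmMean n (l - 1) μ / esymmMean n l μ))) 0 := by
  have h := ((hasDerivAt_esymm_add_const hkn μ).div
    (hasDerivAt_esymm_add_const (hlk.le.trans hkn) μ) (by simpa using hl.ne')).rpow_const
    (p := ((k : ℝ) - l)⁻¹) (Or.inl (by simpa using (div_pos hk hl).ne'))
  simp only [Pi.div_apply, add_zero] at h
  eta_reduce at h
  refine h.congr_deriv ?_
  rw [Gq, Real.rpow_sub_one (div_pos hk hl).ne']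
  generalize (esymm n k μ / esymm n l μ) ^ ((k : ℝ) - l)⁻¹ = Q
  have : (n.choose k : ℝ) ≠ 0 := Nat.cast_ne_zero.mpr (Nat.choose_pos hkn).ne'
  have : (n.choose l : ℝ) ≠ 0 := Nat.cast_ne_zero.mpr (Nat.choose_pos (hlk.le.trans hkn)).ne'
  have := hk.ne'
  have := hl.ne'
  simp only [esymmMean]
  field_simp

theorem choose_div_rpow_le_Gq_mul (hlk : l < k) (hkn : k ≤ n)
    (hE : ∀ m ≤ k, 0 < esymmMean n m μ) :
    ((n.choose k : ℝ) / n.choose l) ^ ((k : ℝ) - l)⁻¹ ≤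
      ((k : ℝ) - l)⁻¹ * Gq n k l μ *
        (k * (esymmMean n (k - 1) μ / esymmMean n k μ) -
          l * (esymmMean n (l - 1) μ / esymmMean n l μ)) := by
  have hnewton :=
    sub_le_rpow_mul_of_mul_le_sq hE (fun i hi => esymmMean_mul_le_sq (by omega) μ) hlk
  have hGq : Gq n k l μ = ((n.choose k : ℝ) / n.choose l) ^ ((k : ℝ) - l)⁻¹ *
      (esymmMean n k μ / esymmMean n l μ) ^ ((k : ℝ) - l)⁻¹ := by
    rw [Gq, esymm_eq_choose_mul_esymmMean hkn, esymm_eq_choose_mul_esymmMean (hlk.le.trans hkn),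
      mul_div_mul_comm, Real.mul_rpow (by positivity) (div_pos (hE k le_rfl) (hE l hlk.le)).le]
  rw [hGq]
  have hkl : (0 : ℝ) < k - l := sub_pos.mpr (by exact_mod_cast hlk)
  set c := ((k : ℝ) - l)⁻¹
  set B := ((n.choose k : ℝ) / n.choose l) ^ c
  have hc : c * (k - l) = 1 := inv_mul_cancel₀ hkl.ne'
  have : 0 < c := inv_pos.mpr hkl
  calc B = B * (c * (k - l)) := by rw [hc, mul_one]
    _ ≤ B * (c * ((esymmMean n k μ / esymmMean n l μ) ^ c *
          (k * (esymmMean n (k - 1) μ / esymmMean n k μ) -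
            l * (esymmMean n (l - 1) μ / esymmMean n l μ)))) := by gcongr
    _ = _ := by ring

end HessianQuotient

theorem stmt_2 (n k l : ℕ) (hl : l < k) (hkn : k ≤ n)
    (μ : Fin n → ℝ) (hΓ : ∀ j, 1 ≤ j → j ≤ k → 0 < esymm n j μ) :
    ((n.choose k : ℝ) / (n.choose l : ℝ)) ^ ((((k : ℝ) - l))⁻¹) ≤
      ∑ i : Fin n, fderiv ℝ (Gq n k l) μ (Pi.single i 1) := by
  have hσ : ∀ m ≤ k, 0 < esymm n m μ := fun m hm => by
    rcases m with _ | m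
    · simp [esymm]
    · exact hΓ _ (by omega) hm
  have hE : ∀ m ≤ k, 0 < esymmMean n m μ := fun m hm =>
    div_pos (hσ m hm) (by exact_mod_cast Nat.choose_pos (hm.trans hkn))
  have hline : HasDerivAt (fun t => Gq n k l (fun i => μ i + t))
      (fderiv ℝ (Gq n k l) μ (fun _ => 1)) 0 :=
    (differentiableAt_Gq (hσ k le_rfl) (hσ l hl.le)).hasFDerivAt.comp_hasDerivAt_of_eq 0
      (hasDerivAt_pi.mpr fun i => (hasDerivAt_id 0).const_add (μ i)) (by simp)
  rw [← map_sum, univ_sum_single,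
    hline.unique (hasDerivAt_Gq_add_const hl hkn (hσ k le_rfl) (hσ l hl.le))]
  exact choose_div_rpow_le_Gq_mul hl hkn hE
end

section
/- Let μ ∈ Γ_k with 0 ≤ l ≤ k−2 and suppose μ_i ≥ c > 0 for all i. Then σ_k(μ)/σ_l(μ) ≥ (C(n,k)/C(n,l)) c^{k-l}. -/
open Finset

lemma sum_powersetCard_sum_powersetCard {α M : Type*} [DecidableEq α] [AddCommMonoid M]
    (U : Finset α) {k l : ℕ} (hlk : l ≤ k) (f : Finset α → M) :
    ∑ S ∈ U.powersetCard k, ∑ T ∈ S.powersetCard l, f T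
      = (#U - l).choose (k - l) • ∑ T ∈ U.powersetCard l, f T := by
  rw [sum_comm' (t' := U.powersetCard l) (s' := fun T => (U.powersetCard k).filter (T ⊆ ·))]
  · rw [smul_sum]
    refine sum_congr rfl fun T hT => ?_
    obtain ⟨hTU, hTl⟩ := mem_powersetCard.mp hT
    rw [sum_const, card_filter_powersetCard_subset T U k hTU (hTl ▸ hlk), hTl]
  · intro S T
    simp only [mem_powersetCard, mem_filter]
    constructor
    · rintro ⟨⟨hSU, hSk⟩, hTS, hTl⟩
      exact ⟨⟨⟨hSU, hSk⟩, hTS⟩, hTS.trans hSU, hTl⟩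
    · rintro ⟨⟨⟨hSU, hSk⟩, hTS⟩, -, hTl⟩
      exact ⟨⟨hSU, hSk⟩, hTS, hTl⟩

lemma prod_mul_pow_card_sdiff_le {ι R : Type*} [DecidableEq ι] [CommSemiring R] [PartialOrder R]
    [IsOrderedRing R] {S T : Finset ι} (hTS : T ⊆ S) {μ : ι → R} {c : R} (hc : 0 ≤ c)
    (hμc : ∀ i ∈ S, c ≤ μ i) :
    (∏ i ∈ T, μ i) * c ^ #(S \ T) ≤ ∏ i ∈ S, μ i := by
  rw [← prod_sdiff hTS, ← prod_const, mul_comm]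
  have hT : 0 ≤ ∏ i ∈ T, μ i := prod_nonneg fun i hi => hc.trans (hμc i (hTS hi))
  gcongr with i hi
  exact hμc i (mem_sdiff.mp hi).1

lemma esymm_pos {n m : ℕ} (hm : m ≤ n) {μ : Fin n → ℝ} (hμ : ∀ i, 0 < μ i) :
    0 < esymm n m μ :=
  sum_pos (fun _ _ => prod_pos fun i _ => hμ i)
    (powersetCard_nonempty.mpr (by simpa using hm))

lemma choose_mul_pow_mul_esymm_le {n k l : ℕ} (hlk : l ≤ k) {μ : Fin n → ℝ} {c : ℝ}
    (hc : 0 ≤ c) (hμc : ∀ i, c ≤ μ i) :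
    (n - l).choose (k - l) * c ^ (k - l) * esymm n l μ ≤ k.choose l * esymm n k μ := by
  calc (n - l).choose (k - l) * c ^ (k - l) * esymm n l μ
      = ∑ S ∈ powersetCard k univ, ∑ T ∈ S.powersetCard l, (∏ i ∈ T, μ i) * c ^ (k - l) := by
        rw [sum_powersetCard_sum_powersetCard _ hlk, card_univ, Fintype.card_fin, nsmul_eq_mul,
          esymm, ← sum_mul]
        ring
    _ ≤ ∑ S ∈ powersetCard k univ, ∑ _T ∈ S.powersetCard l, ∏ i ∈ S, μ i := by
        refine sum_le_sum fun S hS => sum_le_sum fun T hT => ?_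
        obtain ⟨hTS, hTl⟩ := mem_powersetCard.mp hT
        have hcard : #(S \ T) = k - l := by
          rw [card_sdiff_of_subset hTS, (mem_powersetCard.mp hS).2, hTl]
        exact hcard ▸ prod_mul_pow_card_sdiff_le hTS hc fun i _ => hμc i
    _ = k.choose l * esymm n k μ := by
        rw [esymm, mul_sum]
        refine sum_congr rfl fun S hS => ?_
        rw [sum_const, card_powersetCard, (mem_powersetCard.mp hS).2, nsmul_eq_mul]

theorem stmt_12_general (n k l : ℕ) (hl : l + 2 ≤ k) (hkn : k ≤ n)
    (μ : Fin n → ℝ)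
    (c : ℝ) (hc : 0 < c) (hμc : ∀ i, c ≤ μ i) :
    ((n.choose k : ℝ) / (n.choose l : ℝ)) * c ^ (k - l)
      ≤ esymm n k μ / esymm n l μ := by
  have hlk : l ≤ k := by omega
  have hσl : 0 < esymm n l μ := esymm_pos (hlk.trans hkn) fun i => hc.trans_le (hμc i)
  have hnl : (0 : ℝ) < n.choose l := by exact_mod_cast Nat.choose_pos (hlk.trans hkn)
  have hkl : (0 : ℝ) < k.choose l := by exact_mod_cast Nat.choose_pos hlk
  have hchoose : (n.choose k * k.choose l : ℝ) = n.choose l * (n - l).choose (k - l) := by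
    exact_mod_cast Nat.choose_mul hlk
  rw [div_mul_eq_mul_div, div_le_div_iff₀ hnl hσl]
  refine le_of_mul_le_mul_left ?_ hkl
  calc (k.choose l : ℝ) * (n.choose k * c ^ (k - l) * esymm n l μ)
      = n.choose l * ((n - l).choose (k - l) * c ^ (k - l) * esymm n l μ) := by
        linear_combination c ^ (k - l) * esymm n l μ * hchoose
    _ ≤ n.choose l * (k.choose l * esymm n k μ) :=
        mul_le_mul_of_nonneg_left (choose_mul_pow_mul_esymm_le hlk hc.le hμc) hnl.le
    _ = k.choose l * (esymm n k μ * n.choose l) := by ring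

theorem stmt_12 (n k l : ℕ) (hl : l + 2 ≤ k) (hkn : k ≤ n)
    (μ : Fin n → ℝ) (hΓ : ∀ j, 1 ≤ j → j ≤ k → 0 < esymm n j μ)
    (c : ℝ) (hc : 0 < c) (hμc : ∀ i, c ≤ μ i) :
    ((n.choose k : ℝ) / (n.choose l : ℝ)) * c ^ (k - l)
      ≤ esymm n k μ / esymm n l μ :=
  stmt_12_general n k l hl hkn μ c hc hμc
end
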